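/- Let n be odd and G = ⟨x, y | xⁿ = y², x^{2n} = 1, y⁻¹xy = x⁻¹⟩ the generalized quaternion group of order 4n. Then the group with presentation ⟨x, y | xⁿ = y², x^{2n} = 1, y⁻¹xy = x⁻¹, yⁿ = x², y^{2n} = 1, x⁻¹yx = y⁻¹⟩ is the trivial group. -/
import Mathlib


/-- Relators of the symmetrized generalized quaternion presentation
`⟨x, y | xⁿ = y², x^{2n} = 1, y⁻¹xy = x⁻¹, yⁿ = x², y^{2n} = 1, x⁻¹yx = y⁻¹⟩`,
with generator `0` for `x` and `1` for `y`. -/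
def symQuatRels (n : ℕ) : Set (FreeGroup (Fin 2)) :=
  {FreeGroup.of 0 ^ n * (FreeGroup.of 1 ^ 2)⁻¹,
   FreeGroup.of 0 ^ (2 * n),
   (FreeGroup.of 1)⁻¹ * FreeGroup.of 0 * FreeGroup.of 1 * FreeGroup.of 0,
   FreeGroup.of 1 ^ n * (FreeGroup.of 0 ^ 2)⁻¹,
   FreeGroup.of 1 ^ (2 * n),
   (FreeGroup.of 0)⁻¹ * FreeGroup.of 1 * FreeGroup.of 0 * FreeGroup.of 1}

/-- If `a ^ 4 = 1` and `a ^ n = 1` with `n` odd, then `a = 1`. -/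
lemma aux_odd_pow_eq_one {G : Type*} [Group G] {a : G} {n : ℕ} (hn : Odd n)
    (h4 : a ^ 4 = 1) (hN : a ^ n = 1) : a = 1 := by
  obtain ⟨k, hk⟩ := hn
  have hmul : n * n = 4 * (k * k + k) + 1 := by subst hk; ring
  have h : a ^ (n * n) = 1 := by rw [pow_mul, hN, one_pow]
  rwa [hmul, pow_add, pow_mul, h4, one_pow, one_mul, pow_one] at h

/-- If conjugation by `a` inverts `b` and `b ^ n = a ^ 2`, then `a ^ 4 = 1`. -/
lemma aux_four_pow_eq_one {G : Type*} [Group G] {a b : G} {n : ℕ}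
    (hconj : a⁻¹ * b * a = b⁻¹) (hpow : b ^ n = a ^ 2) : a ^ 4 = 1 := by
  have h1 : (a⁻¹ * b * a) ^ n = a⁻¹ * b ^ n * a := by
    rw [show a⁻¹ * b * a = a⁻¹ * b * a⁻¹⁻¹ by rw [inv_inv], conj_pow, inv_inv]
  have h2 : a⁻¹ * b ^ n * a = (b ^ n)⁻¹ := by
    rw [← h1, hconj, inv_pow]
  rw [hpow] at h2
  have h3 : a ^ 2 = (a ^ 2)⁻¹ := by
    have h : a⁻¹ * a ^ 2 * a = a ^ 2 := by group
    exact h.symm.trans h2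
  have h4 : a ^ 2 * a ^ 2 = 1 := by
    nth_rewrite 2 [h3]
    rw [mul_inv_cancel]
  calc a ^ 4 = a ^ 2 * a ^ 2 := by rw [← pow_add]
    _ = 1 := h4

/-- For odd `n`, the quotient of the generalized quaternion group
`⟨x, y | xⁿ = y², x^{2n} = 1, y⁻¹xy = x⁻¹⟩` of order `4n` obtained by adding the
relations with `x` and `y` interchanged is the trivial group. -/
theorem stmt_11 (n : ℕ) (hn : Odd n) :
    ∀ g : PresentedGroup (symQuatRels n), g = 1 := by
  set x : PresentedGroup (symQuatRels n) := PresentedGroup.of 0 with hxdef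
  set y : PresentedGroup (symQuatRels n) := PresentedGroup.of 1 with hydef
  have key : ∀ r ∈ symQuatRels n, PresentedGroup.mk (symQuatRels n) r = 1 := by
    intro r hr
    exact (QuotientGroup.eq_one_iff r).2 (Subgroup.subset_normalClosure hr)
  have hx : x = PresentedGroup.mk (symQuatRels n) (FreeGroup.of 0) := rfl
  have hy : y = PresentedGroup.mk (symQuatRels n) (FreeGroup.of 1) := rfl
  have r1 : x ^ n * (y ^ 2)⁻¹ = 1 := by
    have := key _ (show FreeGroup.of 0 ^ n * (FreeGroup.of 1 ^ 2)⁻¹ ∈ symQuatRels n by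
      simp [symQuatRels])
    simpa [map_mul, map_pow, map_inv, ← hx, ← hy] using this
  have r2 : x ^ (2 * n) = 1 := by
    have := key _ (show FreeGroup.of 0 ^ (2 * n) ∈ symQuatRels n by simp [symQuatRels])
    simpa [map_pow, ← hx] using this
  have r3 : y⁻¹ * x * y * x = 1 := by
    have := key _ (show (FreeGroup.of 1)⁻¹ * FreeGroup.of 0 * FreeGroup.of 1 * FreeGroup.of 0
        ∈ symQuatRels n by simp [symQuatRels])
    simpa [map_mul, map_inv, ← hx, ← hy] using this
  have r4 : y ^ n * (x ^ 2)⁻¹ = 1 := by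
    have := key _ (show FreeGroup.of 1 ^ n * (FreeGroup.of 0 ^ 2)⁻¹ ∈ symQuatRels n by
      simp [symQuatRels])
    simpa [map_mul, map_pow, map_inv, ← hx, ← hy] using this
  have r5 : y ^ (2 * n) = 1 := by
    have := key _ (show FreeGroup.of 1 ^ (2 * n) ∈ symQuatRels n by simp [symQuatRels])
    simpa [map_pow, ← hy] using this
  have r6 : x⁻¹ * y * x * y = 1 := by
    have := key _ (show (FreeGroup.of 0)⁻¹ * FreeGroup.of 1 * FreeGroup.of 0 * FreeGroup.of 1
        ∈ symQuatRels n by simp [symQuatRels])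
    simpa [map_mul, map_inv, ← hx, ← hy] using this
  -- Rephrase relations
  have e1 : x ^ n = y ^ 2 := by
    have := mul_eq_one_iff_eq_inv.mp r1; rwa [inv_inv] at this
  have e4 : y ^ n = x ^ 2 := by
    have := mul_eq_one_iff_eq_inv.mp r4; rwa [inv_inv] at this
  have c3 : y⁻¹ * x * y = x⁻¹ := mul_eq_one_iff_eq_inv.mp r3
  have c6 : x⁻¹ * y * x = y⁻¹ := mul_eq_one_iff_eq_inv.mp r6
  -- x⁴ = 1 and y⁴ = 1
  have hx4 : x ^ 4 = 1 := aux_four_pow_eq_one c6 e4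
  have hy4 : y ^ 4 = 1 := aux_four_pow_eq_one c3 e1
  -- x² = 1 since n is odd and x^(2n) = 1
  obtain ⟨k, hk⟩ := hn
  have hx2 : x ^ 2 = 1 := by
    have h2n : 2 * n = 4 * k + 2 := by omega
    have := r2
    rw [h2n, pow_add, pow_mul, hx4, one_pow, one_mul] at this
    exact this
  -- yⁿ = 1, hence y = 1
  have hyn : y ^ n = 1 := by rw [e4, hx2]
  have hy1 : y = 1 := aux_odd_pow_eq_one ⟨k, hk⟩ hy4 hyn
  -- xⁿ = 1, hence x = 1
  have hxn : x ^ n = 1 := by rw [e1, hy1, one_pow]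
  have hx1 : x = 1 := aux_odd_pow_eq_one ⟨k, hk⟩ hx4 hxn
  -- conclude
  intro g
  have : g ∈ (⊥ : Subgroup (PresentedGroup (symQuatRels n))) := by
    refine PresentedGroup.generated_by _ ⊥ (fun j => ?_) g
    fin_cases j
    · exact Subgroup.mem_bot.mpr hx1
    · exact Subgroup.mem_bot.mpr hy1
  exact Subgroup.mem_bot.mp this
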